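/- arXiv:1012.5409 — 4 statements merged into one kernel-verified Lean document; each statement's English description precedes it below -/
import Mathlib

section
/- Let d ≥ 1 and d < α < d+2. There exists c > 0 such that for all x, y ∈ ℝ^d with |x-y| ≤ 1, the sum ∑_{k ∈ ℤ^d} (1+4π²|k|²)^(-α/2) · 2 sin²(π k·(x-y)) is at most c|x-y|^(α-d). -/
/-!
Write `h = x - y`, `t = |h|` and `β = α - d ∈ (0, 2)`. The sup-norm shell `‖k‖_∞ = m` of `ℤ^d` has
`O(m^(d-1))` points, on each of which the weight is `O((2πm)^(-α))` and, by Cauchy–Schwarz,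
`2 sin²(π k·h) ≤ 2 min(1, π² d m² t²)`. Hence the lattice sum is `O(∑ₘ m^(-1-β) min(1, (tm)²))`,
and comparing this with `∫₀^∞ x^(-1-β) min(1, (tx)²) dx = t^β (1/(2-β) + 1/β)`, split at `x = 1/t`,
gives the bound `O(t^β)`.
-/

open Real Finset MeasureTheory

section Profile

variable {β t : ℝ}

lemma rpow_neg_one_sub_mul_min_sq_of_mem_Ioc (ht : 0 < t) {x : ℝ} (hx : x ∈ Set.Ioc 0 t⁻¹) :
    x ^ (-1 - β) * min 1 ((t * x) ^ 2) = t ^ 2 * x ^ (1 - β) := by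
  have htx : t * x ≤ 1 := (le_inv_mul_iff₀ ht).1 (by rw [mul_one]; exact hx.2)
  rw [min_eq_right (pow_le_one₀ (by positivity [hx.1]) htx),
    show (1 : ℝ) - β = -1 - β + 2 by ring, rpow_add hx.1, rpow_two]
  ring

lemma rpow_neg_one_sub_mul_min_sq_of_mem_Ioi (ht : 0 < t) {x : ℝ} (hx : x ∈ Set.Ioi t⁻¹) :
    x ^ (-1 - β) * min 1 ((t * x) ^ 2) = x ^ (-1 - β) := by
  rw [min_eq_left (one_le_pow₀ ((inv_lt_iff_one_lt_mul₀' ht).1 hx).le), mul_one]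

lemma integrableOn_Ioi_rpow_neg_one_sub_mul_min_sq (hβ : 0 < β) (hβ2 : β < 2) (ht : 0 < t) :
    IntegrableOn (fun x : ℝ => x ^ (-1 - β) * min 1 ((t * x) ^ 2)) (Set.Ioi 0) := by
  rw [← Set.Ioc_union_Ioi_eq_Ioi (inv_pos.2 ht).le, integrableOn_union]
  refine ⟨?_, ?_⟩
  · refine IntegrableOn.congr_fun ?_
      (fun x hx => (rpow_neg_one_sub_mul_min_sq_of_mem_Ioc ht hx).symm) measurableSet_Ioc
    exact ((intervalIntegral.intervalIntegrable_rpow' (by linarith)).const_mul _).def'.mono_set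
      Set.Ioc_subset_uIoc
  · exact (integrableOn_Ioi_rpow_of_lt (by linarith) (inv_pos.2 ht)).congr_fun
      (fun x hx => (rpow_neg_one_sub_mul_min_sq_of_mem_Ioi ht hx).symm) measurableSet_Ioi

lemma integral_Ioi_rpow_neg_one_sub_mul_min_sq (hβ : 0 < β) (hβ2 : β < 2) (ht : 0 < t) :
    ∫ x in Set.Ioi 0, x ^ (-1 - β) * min 1 ((t * x) ^ 2) = t ^ β * (1 / (2 - β) + 1 / β) := by
  have hA : (0 : ℝ) ≤ t⁻¹ := (inv_pos.2 ht).le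
  have hint := integrableOn_Ioi_rpow_neg_one_sub_mul_min_sq hβ hβ2 ht
  rw [← Set.Ioc_union_Ioi_eq_Ioi hA,
    setIntegral_union Set.Ioc_disjoint_Ioi_same measurableSet_Ioi
      (hint.mono_set Set.Ioc_subset_Ioi_self) (hint.mono_set (Set.Ioi_subset_Ioi hA)),
    setIntegral_congr_fun measurableSet_Ioc fun _ => rpow_neg_one_sub_mul_min_sq_of_mem_Ioc ht,
    setIntegral_congr_fun measurableSet_Ioi fun _ => rpow_neg_one_sub_mul_min_sq_of_mem_Ioi ht,
    ← intervalIntegral.integral_of_le hA, intervalIntegral.integral_const_mul,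
    integral_rpow (Or.inl (by linarith)), integral_Ioi_rpow_of_lt (by linarith) (inv_pos.2 ht)]
  have h2β : (2 : ℝ) - β ≠ 0 := by linarith
  rw [show 1 - β + 1 = 2 - β by ring, show -1 - β + 1 = -β by ring, zero_rpow h2β, inv_rpow ht.le,
    inv_rpow ht.le, rpow_neg ht.le, inv_inv, rpow_sub ht, rpow_two]
  field_simp
  ring

lemma rpow_neg_one_sub_le_of_le_add_one (hβ : -1 ≤ β) {n x : ℝ} (hn : 1 ≤ n) (hnx : n ≤ x)
    (hx : x ≤ n + 1) : n ^ (-1 - β) ≤ 2 ^ (1 + β) * x ^ (-1 - β) := by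
  calc n ^ (-1 - β) ≤ (x / 2) ^ (-1 - β) :=
        rpow_le_rpow_of_nonpos (by linarith) (by linarith) (by linarith)
    _ = 2 ^ (1 + β) * x ^ (-1 - β) := by
        rw [div_rpow (by linarith) zero_le_two, show -1 - β = -(1 + β) by ring,
          rpow_neg zero_le_two, div_inv_eq_mul, mul_comm]

lemma sum_Ico_rpow_neg_one_sub_mul_min_sq_le (hβ : 0 < β) (hβ2 : β < 2) (ht : 0 ≤ t) (M : ℕ) :
    ∑ n ∈ Ico 1 M, (n : ℝ) ^ (-1 - β) * min 1 ((t * n) ^ 2)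
      ≤ 2 ^ (1 + β) * (1 / (2 - β) + 1 / β) * t ^ β := by
  rcases ht.eq_or_lt with rfl | ht
  · simp [zero_rpow hβ.ne']
  rcases Nat.lt_or_ge M 1 with hM | hM
  · rw [Ico_eq_empty_of_le hM.le, sum_empty]
    positivity
  set f : ℝ → ℝ := fun x => x ^ (-1 - β) * min 1 ((t * x) ^ 2)
  have hf := integrableOn_Ioi_rpow_neg_one_sub_mul_min_sq hβ hβ2 ht
  have hf0 : ∀ x ∈ Set.Ioi (0 : ℝ), 0 ≤ f x := fun x hx => by
    have := hx.out
    positivity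
  calc ∑ n ∈ Ico 1 M, f n ≤ ∫ x in (1 : ℕ)..M, 2 ^ (1 + β) * f x := by
        refine sum_Ico_le_integral_of_le hM (fun n hn x hx => ?_)
          ((hf.mono_set fun x hx => ?_).const_mul _)
        · have hn1 : (1 : ℝ) ≤ n := by exact_mod_cast hn.1
          obtain ⟨hnx, hxn⟩ := hx
          push_cast at hxn
          have hmin : min 1 ((t * n) ^ 2) ≤ min 1 ((t * x) ^ 2) := by gcongr
          calc f n ≤ (2 ^ (1 + β) * x ^ (-1 - β)) * min 1 ((t * x) ^ 2) :=
                mul_le_mul (rpow_neg_one_sub_le_of_le_add_one (by linarith) hn1 hnx hxn.le)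
                  hmin (by positivity) (mul_nonneg (by positivity) (rpow_nonneg (by linarith) _))
            _ = 2 ^ (1 + β) * f x := mul_assoc _ _ _
        · exact Set.mem_Ioi.2 (lt_of_lt_of_le one_pos (by exact_mod_cast hx.1))
    _ = 2 ^ (1 + β) * ∫ x in Set.Ioc 1 (M : ℝ), f x := by
        rw [intervalIntegral.integral_const_mul,
          intervalIntegral.integral_of_le (by exact_mod_cast hM), Nat.cast_one]
    _ ≤ 2 ^ (1 + β) * ∫ x in Set.Ioi 0, f x := by
        refine mul_le_mul_of_nonneg_left ?_ (by positivity)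
        exact setIntegral_mono_set hf (ae_restrict_of_forall_mem measurableSet_Ioi hf0)
          (Set.Ioc_subset_Ioi_self.trans (Set.Ioi_subset_Ioi zero_le_one)).eventuallyLE
    _ = 2 ^ (1 + β) * (1 / (2 - β) + 1 / β) * t ^ β := by
        rw [integral_Ioi_rpow_neg_one_sub_mul_min_sq hβ hβ2 ht]
        ring

end Profile

section IntCube

variable (ι : Type*) [Fintype ι] [DecidableEq ι]

noncomputable def intCube (n : ℕ) : Finset (ι → ℤ) :=
  Fintype.piFinset fun _ => Icc (-(n : ℤ)) n

variable {ι}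

lemma mem_intCube {n : ℕ} {k : ι → ℤ} : k ∈ intCube ι n ↔ ∀ i, |k i| ≤ n := by
  simp [intCube, abs_le]

lemma intCube_mono : Monotone (intCube ι) := fun _ _ hmn _ hk =>
  mem_intCube.2 fun i => (mem_intCube.1 hk i).trans (by exact_mod_cast hmn)

lemma intCube_zero : intCube ι 0 = {0} := by
  ext k
  simp [mem_intCube, funext_iff]

lemma exists_subset_intCube (F : Finset (ι → ℤ)) : ∃ M, F ⊆ intCube ι M :=
  ⟨F.sup fun k => univ.sup fun i => (k i).natAbs, fun k hk => mem_intCube.2 fun i => by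
    rw [Int.abs_eq_natAbs, Nat.cast_le]
    exact (le_sup (f := fun i => (k i).natAbs) (mem_univ i)).trans
      (le_sup (f := fun k => univ.sup fun i => (k i).natAbs) hk)⟩

lemma card_intCube (n : ℕ) : #(intCube ι n) = (2 * n + 1) ^ Fintype.card ι := by
  simp only [intCube, Fintype.card_piFinset, Int.card_Icc, prod_const, card_univ]
  congr
  omega

lemma card_intCube_succ_sdiff_le (n : ℕ) :
    #(intCube ι (n + 1) \ intCube ι n)
      ≤ 2 * Fintype.card ι * (2 * n + 3) ^ (Fintype.card ι - 1) := by
  rw [card_sdiff_of_subset (intCube_mono n.le_succ), card_intCube, card_intCube,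
    show 2 * (n + 1) + 1 = 2 * n + 3 by ring]
  have := abs_pow_sub_pow_le (2 * n + 3 : ℤ) (2 * n + 1) (Fintype.card ι)
  zify [Nat.pow_le_pow_left (show 2 * n + 1 ≤ 2 * n + 3 by omega)]
  simp only [abs_of_nonneg (by positivity : (0 : ℤ) ≤ 2 * n + 3),
    abs_of_nonneg (by positivity : (0 : ℤ) ≤ 2 * n + 1),
    max_eq_left (by omega : (2 * n + 1 : ℤ) ≤ 2 * n + 3)] at this
  grind

lemma sum_sq_mem_Icc_of_mem_intCube_succ_sdiff {n : ℕ} {k : ι → ℤ}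
    (hk : k ∈ intCube ι (n + 1) \ intCube ι n) :
    (n + 1 : ℝ) ^ 2 ≤ ∑ i, (k i : ℝ) ^ 2 ∧
      ∑ i, (k i : ℝ) ^ 2 ≤ Fintype.card ι * (n + 1 : ℝ) ^ 2 := by
  rw [mem_sdiff, mem_intCube, mem_intCube, not_forall] at hk
  obtain ⟨hle, j, hj⟩ := hk
  have hsq (i : ι) : (k i : ℝ) ^ 2 = |(k i : ℝ)| ^ 2 := (sq_abs _).symm
  constructor
  · calc (n + 1 : ℝ) ^ 2 ≤ (k j : ℝ) ^ 2 := by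
          rw [hsq]
          gcongr
          exact_mod_cast Int.add_one_le_iff.2 (not_le.1 hj)
      _ ≤ ∑ i, (k i : ℝ) ^ 2 :=
          single_le_sum (f := fun i => (k i : ℝ) ^ 2) (fun i _ => sq_nonneg _) (mem_univ j)
  · calc ∑ i, (k i : ℝ) ^ 2 ≤ ∑ _i : ι, (n + 1 : ℝ) ^ 2 := by
          refine sum_le_sum fun i _ => ?_
          rw [hsq]
          gcongr
          exact_mod_cast hle i
      _ = Fintype.card ι * (n + 1 : ℝ) ^ 2 := by simp

end IntCube

lemma sin_pi_mul_sum_sq_le {ι : Type*} [Fintype ι] (k h : ι → ℝ) :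
    sin (π * ∑ i, k i * h i) ^ 2 ≤ min 1 (π ^ 2 * ((∑ i, k i ^ 2) * ∑ i, h i ^ 2)) := by
  refine le_min (sin_sq_le_one _) (sin_sq_le_sq.trans ?_)
  rw [mul_pow]
  gcongr
  exact sum_mul_sq_le_sq_mul_sq _ _ _

lemma min_one_mul_le {a c : ℝ} (hc : 1 ≤ c) : min 1 (c * a) ≤ c * min 1 a := by
  rw [mul_min_of_nonneg _ _ (by linarith), mul_one]
  exact min_le_min_right _ hc

lemma one_add_four_pi_sq_mul_rpow_le {α m q : ℝ} (hα : 0 ≤ α) (hm : 0 < m) (hq : m ^ 2 ≤ q) :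
    (1 + 4 * π ^ 2 * q) ^ (-(α / 2)) ≤ (2 * π) ^ (-α) * m ^ (-α) := by
  calc (1 + 4 * π ^ 2 * q) ^ (-(α / 2)) ≤ ((2 * π * m) ^ 2) ^ (-(α / 2)) := by
        refine rpow_le_rpow_of_nonpos (by positivity) ?_ (by linarith)
        nlinarith [pi_pos]
    _ = (2 * π * m) ^ (-α) := by
        rw [← rpow_natCast, ← rpow_mul (by positivity)]
        push_cast
        ring_nf
    _ = (2 * π) ^ (-α) * m ^ (-α) := mul_rpow (by positivity) hm.le

section BesselDiffTerm

variable {ι : Type*} [Fintype ι]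

/-- The `k`-th summand of `B^α(x,x) - B^α(x,y)`, with `h = x - y`. -/
noncomputable def besselDiffTerm (α : ℝ) (h : ι → ℝ) (k : ι → ℤ) : ℝ :=
  (1 + 4 * π ^ 2 * ∑ i, (k i : ℝ) ^ 2) ^ (-(α / 2)) * (2 * sin (π * ∑ i, (k i : ℝ) * h i) ^ 2)

variable {α t : ℝ} {h : ι → ℝ}

lemma besselDiffTerm_nonneg (k : ι → ℤ) : 0 ≤ besselDiffTerm α h k := by
  unfold besselDiffTerm
  positivity

@[simp]
lemma besselDiffTerm_zero : besselDiffTerm α h 0 = 0 := by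
  simp [besselDiffTerm]

lemma besselDiffTerm_le (hd : 1 ≤ Fintype.card ι) (hα : 0 ≤ α) (hh : ∑ i, h i ^ 2 ≤ t ^ 2)
    {k : ι → ℤ} {m : ℝ} (hm : 0 < m) (hlow : m ^ 2 ≤ ∑ i, (k i : ℝ) ^ 2)
    (hup : ∑ i, (k i : ℝ) ^ 2 ≤ Fintype.card ι * m ^ 2) :
    besselDiffTerm α h k
      ≤ 2 * π ^ 2 * Fintype.card ι * (2 * π) ^ (-α) * (m ^ (-α) * min 1 ((t * m) ^ 2)) := by
  have hc : 1 ≤ π ^ 2 * Fintype.card ι :=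
    one_le_mul_of_one_le_of_one_le (one_le_pow₀ (by linarith [pi_gt_three])) (by exact_mod_cast hd)
  have hsin :
      sin (π * ∑ i, (k i : ℝ) * h i) ^ 2 ≤ π ^ 2 * Fintype.card ι * min 1 ((t * m) ^ 2) :=
    calc sin (π * ∑ i, (k i : ℝ) * h i) ^ 2
        ≤ min 1 (π ^ 2 * ((∑ i, (k i : ℝ) ^ 2) * ∑ i, h i ^ 2)) := sin_pi_mul_sum_sq_le _ _
      _ ≤ min 1 (π ^ 2 * ((Fintype.card ι * m ^ 2) * t ^ 2)) := by gcongr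
      _ = min 1 (π ^ 2 * Fintype.card ι * (t * m) ^ 2) := by ring_nf
      _ ≤ π ^ 2 * Fintype.card ι * min 1 ((t * m) ^ 2) := min_one_mul_le hc
  calc besselDiffTerm α h k
      ≤ ((2 * π) ^ (-α) * m ^ (-α))
          * (2 * (π ^ 2 * Fintype.card ι * min 1 ((t * m) ^ 2))) := by
        unfold besselDiffTerm
        gcongr
        exact one_add_four_pi_sq_mul_rpow_le hα hm hlow
    _ = _ := by ring

end BesselDiffTerm

section LatticeSum

variable {ι : Type*} [Fintype ι] [DecidableEq ι] {α t : ℝ} {h : ι → ℝ}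

lemma card_intCube_succ_sdiff_le_rpow (hd : 1 ≤ Fintype.card ι) (n : ℕ) :
    (#(intCube ι (n + 1) \ intCube ι n) : ℝ)
      ≤ 2 * Fintype.card ι * 3 ^ (Fintype.card ι - 1)
        * (n + 1 : ℝ) ^ ((Fintype.card ι : ℝ) - 1) := by
  calc (#(intCube ι (n + 1) \ intCube ι n) : ℝ)
      ≤ 2 * Fintype.card ι * (3 * (n + 1 : ℝ)) ^ (Fintype.card ι - 1) := by
        have := card_intCube_succ_sdiff_le (ι := ι) n
        rify at this
        refine this.trans ?_
        gcongr
        linarith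
    _ = _ := by
        rw [mul_pow, ← rpow_natCast (n + 1 : ℝ), Nat.cast_sub hd, Nat.cast_one]
        ring

noncomputable def besselShellConst (d : ℕ) (α : ℝ) : ℝ :=
  2 * d * 3 ^ (d - 1) * (2 * π ^ 2 * d * (2 * π) ^ (-α))

noncomputable def besselHolderConst (d : ℕ) (α : ℝ) : ℝ :=
  besselShellConst d α * (2 ^ (1 + (α - d)) * (1 / (2 - (α - d)) + 1 / (α - d)))

lemma besselHolderConst_pos {d : ℕ} {α : ℝ} (hd : 1 ≤ d) (hα : d < α) (hα2 : α < d + 2) :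
    0 < besselHolderConst d α := by
  have : (0 : ℝ) < 2 - (α - d) := by linarith
  have : (0 : ℝ) < α - d := by linarith
  have : (0 : ℝ) < d := by exact_mod_cast hd
  unfold besselHolderConst besselShellConst
  positivity

lemma sum_besselDiffTerm_intCube_succ_sdiff_le (hd : 1 ≤ Fintype.card ι) (hα : 0 ≤ α)
    (hh : ∑ i, h i ^ 2 ≤ t ^ 2) (n : ℕ) :
    ∑ k ∈ intCube ι (n + 1) \ intCube ι n, besselDiffTerm α h k
      ≤ besselShellConst (Fintype.card ι) α
        * ((n + 1 : ℝ) ^ (-1 - (α - Fintype.card ι)) * min 1 ((t * (n + 1)) ^ 2)) := by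
  have hm : (0 : ℝ) < n + 1 := by positivity
  calc ∑ k ∈ intCube ι (n + 1) \ intCube ι n, besselDiffTerm α h k
      ≤ #(intCube ι (n + 1) \ intCube ι n) • (2 * π ^ 2 * Fintype.card ι * (2 * π) ^ (-α)
          * ((n + 1 : ℝ) ^ (-α) * min 1 ((t * (n + 1)) ^ 2))) := by
        refine sum_le_card_nsmul _ _ _ fun k hk => ?_
        obtain ⟨hlow, hup⟩ := sum_sq_mem_Icc_of_mem_intCube_succ_sdiff hk
        exact besselDiffTerm_le hd hα hh hm hlow hup
    _ ≤ (2 * Fintype.card ι * 3 ^ (Fintype.card ι - 1) * (n + 1 : ℝ) ^ ((Fintype.card ι : ℝ) - 1))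
          * (2 * π ^ 2 * Fintype.card ι * (2 * π) ^ (-α)
            * ((n + 1 : ℝ) ^ (-α) * min 1 ((t * (n + 1)) ^ 2))) := by
        rw [nsmul_eq_mul]
        gcongr
        exact card_intCube_succ_sdiff_le_rpow hd n
    _ = _ := by
        rw [besselShellConst,
          show -1 - (α - Fintype.card ι) = ((Fintype.card ι : ℝ) - 1) + -α by ring, rpow_add hm]
        ring

lemma sum_besselDiffTerm_intCube_le (hd : 1 ≤ Fintype.card ι) (hα : Fintype.card ι < α)
    (hα2 : α < Fintype.card ι + 2) (ht : 0 ≤ t) (hh : ∑ i, h i ^ 2 ≤ t ^ 2) (M : ℕ) :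
    ∑ k ∈ intCube ι M, besselDiffTerm α h k
      ≤ besselHolderConst (Fintype.card ι) α * t ^ (α - Fintype.card ι) := by
  rw [sum_eq_sum_range_sdiff _ intCube_mono, intCube_zero, sum_singleton, besselDiffTerm_zero,
    zero_add, besselHolderConst, mul_assoc]
  calc ∑ n ∈ range M, ∑ k ∈ intCube ι (n + 1) \ intCube ι n, besselDiffTerm α h k
      ≤ ∑ n ∈ range M, besselShellConst (Fintype.card ι) α
          * ((n + 1 : ℝ) ^ (-1 - (α - Fintype.card ι)) * min 1 ((t * (n + 1)) ^ 2)) :=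
        sum_le_sum fun n _ => sum_besselDiffTerm_intCube_succ_sdiff_le hd (by linarith) hh n
    _ = besselShellConst (Fintype.card ι) α
          * ∑ n ∈ Ico 1 (M + 1), (n : ℝ) ^ (-1 - (α - Fintype.card ι)) * min 1 ((t * n) ^ 2) := by
        rw [mul_sum, sum_Ico_eq_sum_range, Nat.add_sub_cancel]
        push_cast
        simp only [add_comm (1 : ℝ)]
    _ ≤ _ := by
        refine mul_le_mul_of_nonneg_left ?_ (by unfold besselShellConst; positivity)
        exact sum_Ico_rpow_neg_one_sub_mul_min_sq_le (by linarith) (by linarith) ht _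

end LatticeSum

/-- Hölder estimate at the diagonal for the Bessel kernel on the torus:
`B^α(x,x) - B^α(x,y) = ∑_k (1+4π²|k|²)^(-α/2) · 2 sin²(π k·(x-y)) ≤ c |x-y|^(α-d)`. -/
theorem stmt1 (d : ℕ) (hd : 1 ≤ d) (α : ℝ) (h1 : (d : ℝ) < α) (h2 : α < d + 2) :
    ∃ c > 0, ∀ x y : EuclideanSpace ℝ (Fin d), dist x y ≤ 1 →
      (∑' k : Fin d → ℤ,
          (1 + 4 * π ^ 2 * ∑ i, (k i : ℝ) ^ 2) ^ (-(α / 2)) *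
            (2 * Real.sin (π * ∑ i, (k i : ℝ) * (x i - y i)) ^ 2))
        ≤ c * dist x y ^ (α - d) := by
  refine ⟨besselHolderConst d α, besselHolderConst_pos hd h1 h2, fun x y _ => ?_⟩
  have hxy : ∑ i, (x i - y i) ^ 2 ≤ dist x y ^ 2 := by
    rw [EuclideanSpace.dist_eq, sq_sqrt (by positivity)]
    simp [Real.dist_eq, sq_abs]
  have hcube := sum_besselDiffTerm_intCube_le (ι := Fin d) (α := α) (t := dist x y)
    (h := fun i => x i - y i)
  simp only [Fintype.card_fin] at hcube
  refine tsum_le_of_sum_le' (by have := besselHolderConst_pos hd h1 h2; positivity) fun F => ?_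
  obtain ⟨M, hFM⟩ := exists_subset_intCube F
  calc ∑ k ∈ F, besselDiffTerm α (fun i => x i - y i) k
      ≤ ∑ k ∈ intCube (Fin d) M, besselDiffTerm α (fun i => x i - y i) k :=
        sum_le_sum_of_subset_of_nonneg hFM fun k _ _ => besselDiffTerm_nonneg k
    _ ≤ _ := hcube hd h1 h2 dist_nonneg hxy M
end

section
/- Let d ≥ 1 and d < α < d+1. Suppose K : (0,∞) → ℝ satisfies 0 ≤ K(t) ≤ c₀ t^{-d/2} for 0 < t ≤ s², K(t) ≤ c₀ t^{-(d+1)/2} s for s² ≤ t ≤ 1, and K(t) ≤ c₀ s for t ≥ 1, where 0 < s ≤ 1. Then ∫₀^∞ t^{α/2-1} e^{-t} K(t) dt ≤ c s^{α-d} for a constant c depending only on c₀, d, α. -/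
open MeasureTheory Real Set

/-!
Split `(0, ∞)` at `s²` and `1`. On `(0, s²]` the bound `K t ≤ c₀ t^(-d/2)` leaves the integrable
power `t^((α-d)/2 - 1)`, whose integral is of order `s^(α-d)` because `α > d`. On `[s², 1]` the
bound `c₀ t^(-(d+1)/2) s` leaves `s · t^((α-d-1)/2 - 1)`, a power that is not integrable at `0`
because `α < d + 1`; its integral from `s²` is of order `s · s^(α-d-1) = s^(α-d)`. On `[1, ∞)`
the factor `e^(-t)` gives at most `c₀ s Γ(α/2)`, and `s ≤ s^(α-d)` since `s ≤ 1` and `α - d ≤ 1`.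
-/

theorem setIntegral_Ioi_eq_Ioc_add_Ioc_add_Ioi {f : ℝ → ℝ} {a b c : ℝ} (hab : a ≤ b)
    (hbc : b ≤ c) (hf : IntegrableOn f (Ioi a)) :
    ∫ t in Ioi a, f t = (∫ t in Ioc a b, f t) + (∫ t in Ioc b c, f t) + ∫ t in Ioi c, f t := by
  have hfb : IntegrableOn f (Ioi b) := hf.mono_set (Ioi_subset_Ioi hab)
  rw [← Ioc_union_Ioi_eq_Ioi hab, setIntegral_union Ioc_disjoint_Ioi_same measurableSet_Ioi
      (hf.mono_set Ioc_subset_Ioi_self) hfb, ← Ioc_union_Ioi_eq_Ioi hbc,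
    setIntegral_union Ioc_disjoint_Ioi_same measurableSet_Ioi
      (hfb.mono_set Ioc_subset_Ioi_self) (hfb.mono_set (Ioi_subset_Ioi hbc)), add_assoc]

theorem sq_rpow_div_two {s : ℝ} (hs : 0 ≤ s) (γ : ℝ) : (s ^ 2) ^ (γ / 2) = s ^ γ := by
  rw [← rpow_natCast_mul hs, Nat.cast_ofNat, mul_div_cancel₀ _ two_ne_zero]

theorem integral_Ioc_zero_rpow_sub_one {a γ : ℝ} (ha : 0 ≤ a) (hγ : 0 < γ) :
    ∫ t in Ioc 0 a, t ^ (γ - 1) = a ^ γ / γ := by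
  rw [← intervalIntegral.integral_of_le ha, integral_rpow (Or.inl (by linarith)), sub_add_cancel,
    zero_rpow hγ.ne', sub_zero]

theorem integral_Ioc_rpow_sub_one_le {a b γ : ℝ} (ha : 0 < a) (hab : a ≤ b) (hγ : γ < 0) :
    ∫ t in Ioc a b, t ^ (γ - 1) ≤ a ^ γ / -γ := by
  have h0 : (0 : ℝ) ∉ uIcc a b := by
    rw [uIcc_of_le hab]
    exact fun h => h.1.not_gt ha
  rw [← intervalIntegral.integral_of_le hab, integral_rpow (Or.inr ⟨by linarith, h0⟩),
    sub_add_cancel, ← neg_div_neg_eq, neg_sub]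
  exact div_le_div_of_nonneg_right (by linarith [rpow_nonneg (ha.le.trans hab) γ]) (by linarith)

theorem integral_Ioi_exp_neg_mul_rpow_le_Gamma {a x : ℝ} (ha : 0 ≤ a) (hx : 0 < x) :
    ∫ t in Ioi a, exp (-t) * t ^ (x - 1) ≤ Gamma x := by
  rw [Gamma_eq_integral hx]
  refine setIntegral_mono_set (GammaIntegral_convergent hx) ?_
    (Filter.Eventually.of_forall (Ioi_subset_Ioi ha))
  filter_upwards [ae_restrict_mem measurableSet_Ioi] with t ht
  exact mul_nonneg (exp_pos _).le (rpow_nonneg (le_of_lt ht) _)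

theorem rpow_mul_exp_neg_mul_le {t x k B : ℝ} (ht : 0 ≤ t) (hk : 0 ≤ k) (hkB : k ≤ B) :
    t ^ x * exp (-t) * k ≤ t ^ x * B := by
  have : exp (-t) ≤ 1 := exp_le_one_iff.mpr (by linarith)
  calc t ^ x * exp (-t) * k ≤ t ^ x * 1 * B := by gcongr
    _ = t ^ x * B := by rw [mul_one]

namespace BesselKernel

variable {K : ℝ → ℝ} {s α d c₀ : ℝ}

theorem integral_Ioc_zero_sq_le (hs : 0 < s) (hdα : d < α) (hK0 : ∀ t, 0 < t → 0 ≤ K t)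
    (hK : ∀ t, 0 < t → t ≤ s ^ 2 → K t ≤ c₀ * t ^ (-d / 2))
    (hf : IntegrableOn (fun t => t ^ (α / 2 - 1) * exp (-t) * K t) (Ioc 0 (s ^ 2))) :
    ∫ t in Ioc 0 (s ^ 2), t ^ (α / 2 - 1) * exp (-t) * K t
      ≤ 2 * c₀ / (α - d) * s ^ (α - d) := by
  have hγ : 0 < (α - d) / 2 := by linarith
  calc ∫ t in Ioc 0 (s ^ 2), t ^ (α / 2 - 1) * exp (-t) * K t
      ≤ ∫ t in Ioc 0 (s ^ 2), c₀ * t ^ ((α - d) / 2 - 1) := by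
        refine setIntegral_mono_on hf ?_ measurableSet_Ioc fun t ht => ?_
        · exact (intervalIntegral.intervalIntegrable_rpow' (by linarith)).1.const_mul c₀
        · calc t ^ (α / 2 - 1) * exp (-t) * K t ≤ t ^ (α / 2 - 1) * (c₀ * t ^ (-d / 2)) :=
                rpow_mul_exp_neg_mul_le ht.1.le (hK0 t ht.1) (hK t ht.1 ht.2)
            _ = c₀ * t ^ ((α - d) / 2 - 1) := by
                rw [mul_left_comm, ← rpow_add ht.1]
                ring_nf
    _ = 2 * c₀ / (α - d) * s ^ (α - d) := by
        rw [integral_const_mul, integral_Ioc_zero_rpow_sub_one (sq_nonneg s) hγ,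
          sq_rpow_div_two hs.le]
        field_simp

theorem integral_Ioc_sq_one_le (hs : 0 < s) (hs1 : s ≤ 1) (hαd : α < d + 1) (hc₀ : 0 ≤ c₀)
    (hK0 : ∀ t, 0 < t → 0 ≤ K t)
    (hK : ∀ t, s ^ 2 ≤ t → t ≤ 1 → K t ≤ c₀ * t ^ (-(d + 1) / 2) * s)
    (hf : IntegrableOn (fun t => t ^ (α / 2 - 1) * exp (-t) * K t) (Ioc (s ^ 2) 1)) :
    ∫ t in Ioc (s ^ 2) 1, t ^ (α / 2 - 1) * exp (-t) * K t
      ≤ 2 * c₀ / (d + 1 - α) * s ^ (α - d) := by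
  have hs2 : 0 < s ^ 2 := by positivity
  have hs21 : s ^ 2 ≤ 1 := pow_le_one₀ hs.le hs1
  have h0 : (0 : ℝ) ∉ uIcc (s ^ 2) 1 := by
    rw [uIcc_of_le hs21]
    exact fun h => h.1.not_gt hs2
  calc ∫ t in Ioc (s ^ 2) 1, t ^ (α / 2 - 1) * exp (-t) * K t
      ≤ ∫ t in Ioc (s ^ 2) 1, c₀ * s * t ^ ((α - d - 1) / 2 - 1) := by
        refine setIntegral_mono_on hf ?_ measurableSet_Ioc fun t ht => ?_
        · exact (intervalIntegral.intervalIntegrable_rpow (Or.inr h0)).1.const_mul _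
        · have ht0 : 0 < t := hs2.trans ht.1
          calc t ^ (α / 2 - 1) * exp (-t) * K t
              ≤ t ^ (α / 2 - 1) * (c₀ * t ^ (-(d + 1) / 2) * s) :=
                rpow_mul_exp_neg_mul_le ht0.le (hK0 t ht0) (hK t ht.1.le ht.2)
            _ = c₀ * s * t ^ ((α - d - 1) / 2 - 1) := by
                rw [show t ^ (α / 2 - 1) * (c₀ * t ^ (-(d + 1) / 2) * s)
                    = c₀ * s * (t ^ (α / 2 - 1) * t ^ (-(d + 1) / 2)) by ring, ← rpow_add ht0]
                ring_nf
    _ = c₀ * s * ∫ t in Ioc (s ^ 2) 1, t ^ ((α - d - 1) / 2 - 1) := integral_const_mul _ _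
    _ ≤ c₀ * s * ((s ^ 2) ^ ((α - d - 1) / 2) / -((α - d - 1) / 2)) := by
        gcongr
        exact integral_Ioc_rpow_sub_one_le hs2 hs21 (by linarith)
    _ = 2 * c₀ / (d + 1 - α) * (s * s ^ (α - d - 1)) := by
        have : d + 1 - α ≠ 0 := by linarith
        rw [sq_rpow_div_two hs.le, show -((α - d - 1) / 2) = (d + 1 - α) / 2 by ring]
        field_simp
    _ = 2 * c₀ / (d + 1 - α) * s ^ (α - d) := by
        rw [mul_comm s, ← rpow_add_one hs.ne', sub_add_cancel]

theorem integral_Ioi_one_le (hs : 0 < s) (hs1 : s ≤ 1) (hα : 0 < α) (hαd : α - d ≤ 1)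
    (hc₀ : 0 ≤ c₀) (hK : ∀ t, 1 ≤ t → K t ≤ c₀ * s)
    (hf : IntegrableOn (fun t => t ^ (α / 2 - 1) * exp (-t) * K t) (Ioi 1)) :
    ∫ t in Ioi 1, t ^ (α / 2 - 1) * exp (-t) * K t ≤ c₀ * Gamma (α / 2) * s ^ (α - d) := by
  have hα2 : 0 < α / 2 := half_pos hα
  have hG : IntegrableOn (fun t => exp (-t) * t ^ (α / 2 - 1)) (Ioi 1) :=
    (GammaIntegral_convergent hα2).mono_set (Ioi_subset_Ioi zero_le_one)
  calc ∫ t in Ioi 1, t ^ (α / 2 - 1) * exp (-t) * K t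
      ≤ ∫ t in Ioi 1, c₀ * s * (exp (-t) * t ^ (α / 2 - 1)) := by
        refine setIntegral_mono_on hf (hG.const_mul _) measurableSet_Ioi fun t ht => ?_
        have ht0 : (0 : ℝ) ≤ t := zero_le_one.trans ht.le
        calc t ^ (α / 2 - 1) * exp (-t) * K t ≤ t ^ (α / 2 - 1) * exp (-t) * (c₀ * s) := by
              gcongr
              exact hK t ht.le
          _ = c₀ * s * (exp (-t) * t ^ (α / 2 - 1)) := by ring
    _ = c₀ * s * ∫ t in Ioi 1, exp (-t) * t ^ (α / 2 - 1) := integral_const_mul _ _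
    _ ≤ c₀ * s * Gamma (α / 2) := by
        gcongr
        exact integral_Ioi_exp_neg_mul_rpow_le_Gamma zero_le_one hα2
    _ ≤ c₀ * s ^ (α - d) * Gamma (α / 2) := by
        have : 0 < Gamma (α / 2) := Gamma_pos_of_pos hα2
        gcongr
        simpa using rpow_le_rpow_of_exponent_ge hs hs1 hαd
    _ = c₀ * Gamma (α / 2) * s ^ (α - d) := by ring

end BesselKernel

theorem stmt3_general (d : ℕ) (α : ℝ) (h1 : (d : ℝ) < α) (h2 : α < d + 1)
    (c₀ : ℝ) (hc₀ : 0 < c₀) :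
    ∃ c > 0, ∀ (K : ℝ → ℝ) (s : ℝ), 0 < s → s ≤ 1 →
      (∀ t, 0 < t → 0 ≤ K t) →
      (∀ t, 0 < t → t ≤ s ^ 2 → K t ≤ c₀ * t ^ (-(d : ℝ) / 2)) →
      (∀ t, s ^ 2 ≤ t → t ≤ 1 → K t ≤ c₀ * t ^ (-((d : ℝ) + 1) / 2) * s) →
      (∀ t, 1 ≤ t → K t ≤ c₀ * s) →
      (∫ t in Set.Ioi (0 : ℝ), t ^ (α / 2 - 1) * Real.exp (-t) * K t) ≤ c * s ^ (α - d) := by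
  have hα : 0 < α := (Nat.cast_nonneg d).trans_lt h1
  have hc : 0 < 2 * c₀ / (α - d) + 2 * c₀ / (d + 1 - α) + c₀ * Gamma (α / 2) := by
    have := sub_pos.2 h1
    have := sub_pos.2 h2
    have := Gamma_pos_of_pos (half_pos hα)
    positivity
  refine ⟨_, hc, fun K s hs hs1 hK0 hKa hKb hKc => ?_⟩
  by_cases hf : IntegrableOn (fun t => t ^ (α / 2 - 1) * exp (-t) * K t) (Ioi 0)
  swap
  · rw [integral_undef hf]
    exact mul_nonneg hc.le (rpow_nonneg hs.le _)
  rw [setIntegral_Ioi_eq_Ioc_add_Ioc_add_Ioi (sq_nonneg s) (pow_le_one₀ hs.le hs1) hf]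
  have hsmall := BesselKernel.integral_Ioc_zero_sq_le hs h1 hK0 hKa
    (hf.mono_set Ioc_subset_Ioi_self)
  have hmiddle := BesselKernel.integral_Ioc_sq_one_le hs hs1 h2 hc₀.le hK0 hKb
    (hf.mono_set fun t ht => (sq_nonneg s).trans_lt ht.1)
  have hαd : α - d ≤ 1 := by linarith
  have hlarge := BesselKernel.integral_Ioi_one_le hs hs1 hα hαd hc₀.le hKc
    (hf.mono_set (Ioi_subset_Ioi zero_le_one))
  calc _ ≤ 2 * c₀ / (α - d) * s ^ (α - d) + 2 * c₀ / (d + 1 - α) * s ^ (α - d)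
        + c₀ * Gamma (α / 2) * s ^ (α - d) := add_le_add (add_le_add hsmall hmiddle) hlarge
    _ = _ := by ring

/-- Abstract Hölder continuity estimate for Bessel kernels: if `K(t)` models
`|W(t,x,y) - W(t,x,z)|` with `s = |y-z|`, then `∫₀^∞ t^(α/2-1) e^(-t) K(t) dt ≤ c s^(α-d)`. -/
theorem stmt3 (d : ℕ) (hd : 1 ≤ d) (α : ℝ) (h1 : (d : ℝ) < α) (h2 : α < d + 1)
    (c₀ : ℝ) (hc₀ : 0 < c₀) :
    ∃ c > 0, ∀ (K : ℝ → ℝ) (s : ℝ), 0 < s → s ≤ 1 →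
      (∀ t, 0 < t → 0 ≤ K t) →
      (∀ t, 0 < t → t ≤ s ^ 2 → K t ≤ c₀ * t ^ (-(d : ℝ) / 2)) →
      (∀ t, s ^ 2 ≤ t → t ≤ 1 → K t ≤ c₀ * t ^ (-((d : ℝ) + 1) / 2) * s) →
      (∀ t, 1 ≤ t → K t ≤ c₀ * s) →
      (∫ t in Set.Ioi (0 : ℝ), t ^ (α / 2 - 1) * Real.exp (-t) * K t) ≤ c * s ^ (α - d) :=
  stmt3_general d α h1 h2 c₀ hc₀
end

section
/- Let M be a probability space decomposed into disjoint measurable sets U₁,…,U_N of measures ω₁,…,ω_N, and let K : M × M → ℝ be a bounded symmetric measurable kernel with ∫∫ K(x,y) dx dy = 1. Then the average over (z₁,…,z_N) ∈ U₁ × ⋯ × U_N (with respect to the normalized product measure ∏ ω_j⁻¹ dz_j) of ∑_{i,j} ω_i ω_j K(z_i, z_j) − 1 equals ∑_{j=1}^N ∫_{U_j} ∫_{U_j} (K(x,x) − K(x,y)) dx dy. -/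
/-!
Normalising each `volume.restrict (U j)` to the conditional probability `volume[|U j]` turns the
left side into an expectation under a product of probability measures. The coordinates are
independent there, so `ω_i ω_j 𝔼 K(z_i, z_j)` is `∫_{U_i} ∫_{U_j} K` for `i ≠ j` and
`ω_i ∫_{U_i} K(x, x)` for `i = j`. Splitting `1 = ∫∫ K` along the partition into the same double
integrals, the off-diagonal terms cancel and the diagonal ones give the right side.
-/

open MeasureTheory ProbabilityTheory

lemma Finset.sum_sum_ite_sub_sum_sum {ι G : Type*} [Fintype ι] [DecidableEq ι] [AddCommGroup G]
    (a : ι → G) (b : ι → ι → G) :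
    ∑ i, ∑ j, (if i = j then a i else b i j) - ∑ i, ∑ j, b i j = ∑ i, (a i - b i i) := by
  simp only [← Finset.sum_sub_distrib]
  refine Finset.sum_congr rfl fun i _ => ?_
  rw [Finset.sum_eq_single i (fun j _ hji => by simp [hji.symm]) (by simp)]
  simp

namespace MeasureTheory

variable {α E : Type*} [MeasurableSpace α] [NormedAddCommGroup E] [NormedSpace ℝ E]

lemma integrable_of_abs_le {μ : Measure α} [IsFiniteMeasure μ] {f : α → ℝ} (hf : Measurable f)
    {C : ℝ} (hfC : ∀ x, |f x| ≤ C) : Integrable f μ :=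
  .of_bound hf.aestronglyMeasurable C (.of_forall hfC)

lemma measureReal_smul_integral_cond {μ : Measure α} {s : Set α} (hs : μ.real s ≠ 0)
    (f : α → E) : μ.real s • ∫ x, f x ∂μ[|s] = ∫ x in s, f x ∂μ := by
  rw [ProbabilityTheory.cond, integral_smul_measure, ENNReal.toReal_inv, ← measureReal_def,
    smul_inv_smul₀ hs]

lemma Measure.pi_cond {ι : Type*} [Fintype ι] {μ : Measure α} [SigmaFinite μ] (U : ι → Set α) :
    Measure.pi (fun i => μ[|U i])
      = (∏ i, (μ (U i))⁻¹) • Measure.pi (fun i => μ.restrict (U i)) := by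
  refine Measure.pi_eq fun s hs => ?_
  simp only [Measure.smul_apply, Measure.pi_pi, smul_eq_mul, ← Finset.prod_mul_distrib,
    cond_apply' (hs _), Measure.restrict_apply (hs _), Set.inter_comm]

lemma integral_pi_cond {ι : Type*} [Fintype ι] {μ : Measure α} [SigmaFinite μ] (U : ι → Set α)
    (F : (ι → α) → E) :
    ∫ z, F z ∂Measure.pi (fun i => μ[|U i])
      = (∏ i, (μ.real (U i))⁻¹) • ∫ z, F z ∂Measure.pi (fun i => μ.restrict (U i)) := by
  simp only [Measure.pi_cond, integral_smul_measure, ENNReal.toReal_prod, ENNReal.toReal_inv,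
    measureReal_def]

lemma integral_comp_eval_eval_of_ne {ι : Type*} [Fintype ι] {μ : ι → Measure α}
    [∀ i, IsProbabilityMeasure (μ i)] {i j : ι} (hij : i ≠ j) {f : α → α → E}
    (hf : Integrable (Function.uncurry f) ((μ i).prod (μ j))) :
    ∫ z, f (z i) (z j) ∂Measure.pi μ = ∫ x, ∫ y, f x y ∂μ j ∂μ i := by
  have hindep : IndepFun (fun z : ι → α => z i) (fun z => z j) (Measure.pi μ) :=
    (iIndepFun_pi (X := fun _ => id) fun _ => aemeasurable_id).indepFun hij
  have hmap : (Measure.pi μ).map (fun z => (z i, z j)) = (μ i).prod (μ j) := by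
    rw [(indepFun_iff_map_prod_eq_prod_map_map (measurable_pi_apply i).aemeasurable
      (measurable_pi_apply j).aemeasurable).1 hindep,
      (measurePreserving_eval μ i).map_eq, (measurePreserving_eval μ j).map_eq]
  calc ∫ z, f (z i) (z j) ∂Measure.pi μ
      = ∫ p, Function.uncurry f p ∂(Measure.pi μ).map (fun z => (z i, z j)) :=
        (integral_map (by fun_prop) (hmap ▸ hf.aestronglyMeasurable)).symm
    _ = ∫ x, ∫ y, f x y ∂μ j ∂μ i := by rw [hmap, integral_prod _ hf]; rfl

lemma integral_sum_sum_mul_comp_eval_eval {ι : Type*} [Fintype ι] [DecidableEq ι]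
    {μ : ι → Measure α} [∀ i, IsProbabilityMeasure (μ i)] (w : ι → ℝ) {K : α → α → ℝ}
    (hK : Measurable (Function.uncurry K)) {C : ℝ} (hKC : ∀ x y, |K x y| ≤ C) :
    ∫ z, ∑ i, ∑ j, w i * w j * K (z i) (z j) ∂Measure.pi μ
      = ∑ i, ∑ j, w i * w j *
          if i = j then ∫ x, K x x ∂μ i else ∫ x, ∫ y, K x y ∂μ j ∂μ i := by
  have hint : ∀ i j, Integrable (fun z : ι → α => K (z i) (z j)) (Measure.pi μ) := fun i j =>
    integrable_of_abs_le (by fun_prop) fun z => hKC _ _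
  rw [integral_finsetSum _ fun i _ => integrable_finsetSum _ fun j _ => (hint i j).const_mul _]
  refine Finset.sum_congr rfl fun i _ => ?_
  rw [integral_finsetSum _ fun j _ => (hint i j).const_mul _]
  refine Finset.sum_congr rfl fun j _ => ?_
  rw [integral_const_mul]
  split_ifs with hij
  · subst hij
    have hdiag : Measurable fun x => K x x := hK.comp (measurable_id.prodMk measurable_id)
    exact congrArg _ (integral_comp_eval (μ := μ) (f := fun x => K x x)
      hdiag.aestronglyMeasurable)
  · exact congrArg _ (integral_comp_eval_eval_of_ne hij
      (integrable_of_abs_le hK fun p => hKC p.1 p.2))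

lemma integral_integral_diag_sub {ν : Measure α} [IsFiniteMeasure ν] {K : α → α → ℝ}
    (hK : Measurable (Function.uncurry K)) {C : ℝ} (hKC : ∀ x y, |K x y| ≤ C) :
    ∫ x, ∫ y, (K x x - K x y) ∂ν ∂ν
      = ν.real Set.univ * ∫ x, K x x ∂ν - ∫ x, ∫ y, K x y ∂ν ∂ν := by
  have hinner : ∀ x, ∫ y, (K x x - K x y) ∂ν = ν.real Set.univ * K x x - ∫ y, K x y ∂ν :=
    fun x => by
      rw [integral_sub (integrable_const _)
        (integrable_of_abs_le (f := K x) (hK.comp measurable_prodMk_left) (hKC x)),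
        integral_const, smul_eq_mul]
  simp only [hinner]
  rw [integral_sub, integral_const_mul]
  · exact (integrable_of_abs_le (hK.comp (measurable_id.prodMk measurable_id))
      fun x => hKC x x).const_mul _
  · exact (integrable_of_abs_le hK fun p => hKC p.1 p.2 :
      Integrable _ (ν.prod ν)).integral_prod_left

section Partition

variable {ι : Type*} [Fintype ι] {μ : Measure α} {U : ι → Set α}
  (hmeas : ∀ i, MeasurableSet (U i)) (hdisj : Pairwise (Function.onFun Disjoint U))
  (hcover : ⋃ i, U i = Set.univ)
include hmeas hdisj hcover

lemma integral_eq_sum_setIntegral_of_iUnion_eq_univ {f : α → E} (hf : Integrable f μ) :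
    ∫ x, f x ∂μ = ∑ i, ∫ x in U i, f x ∂μ := by
  rw [← setIntegral_univ, ← hcover, integral_iUnion hmeas hdisj (hcover ▸ hf.integrableOn),
    tsum_fintype]

lemma integral_integral_eq_sum_sum_setIntegral [SFinite μ] {f : α → α → E}
    (hf : Integrable (Function.uncurry f) (μ.prod μ)) :
    ∫ x, ∫ y, f x y ∂μ ∂μ = ∑ i, ∑ j, ∫ x in U i, ∫ y in U j, f x y ∂μ ∂μ := by
  have hinner : ∀ i j, Integrable (fun x => ∫ y in U j, f x y ∂μ) (μ.restrict (U i)) :=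
    fun i j => (hf.mono_measure (by rw [Measure.prod_restrict]; exact Measure.restrict_le_self)
      ).integral_prod_left
  rw [integral_eq_sum_setIntegral_of_iUnion_eq_univ (f := fun x => ∫ y, f x y ∂μ) hmeas hdisj
    hcover hf.integral_prod_left]
  refine Finset.sum_congr rfl fun i _ => ?_
  rw [← integral_finsetSum _ fun j _ => hinner i j]
  refine integral_congr_ae (ae_restrict_of_ae (hf.prod_right_ae.mono fun x hx => ?_))
  exact integral_eq_sum_setIntegral_of_iUnion_eq_univ hmeas hdisj hcover hx

end Partition

end MeasureTheory

theorem stmt6_general {M : Type*} [MeasureSpace M] [IsProbabilityMeasure (volume : Measure M)]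
    (N : ℕ) (U : Fin N → Set M) (hmeas : ∀ j, MeasurableSet (U j))
    (hdisj : Pairwise (Function.onFun Disjoint U)) (hcover : (⋃ j, U j) = Set.univ)
    (ω : Fin N → ℝ) (hω : ∀ j, 0 < ω j)
    (hvol : ∀ j, volume (U j) = ENNReal.ofReal (ω j))
    (K : M → M → ℝ) (hKm : Measurable (Function.uncurry K))
    (C : ℝ) (hKb : ∀ x y, |K x y| ≤ C)
    (hK1 : (∫ x, ∫ y, K x y) = 1) :
    (∏ j, (ω j)⁻¹) *
        (∫ z : Fin N → M, ((∑ i, ∑ j, ω i * ω j * K (z i) (z j)) - 1)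
          ∂Measure.pi fun j => (volume : Measure M).restrict (U j))
      = ∑ j, ∫ x in U j, ∫ y in U j, (K x x - K x y) := by
  set μ : Measure M := volume
  have hμU : ∀ j, μ.real (U j) = ω j := fun j => by
    rw [measureReal_def, hvol, ENNReal.toReal_ofReal (hω j).le]
  have : ∀ j, IsProbabilityMeasure (μ[|U j]) := fun j =>
    cond_isProbabilityMeasure (by simp [μ, hvol, hω j])
  have hpair : ∀ i j, ω i * ω j *
      (if i = j then ∫ x, K x x ∂μ[|U i] else ∫ x, ∫ y, K x y ∂μ[|U j] ∂μ[|U i])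
        = if i = j then ω i * ∫ x in U i, K x x ∂μ else ∫ x in U i, ∫ y in U j, K x y ∂μ ∂μ := by
    have hcond : ∀ k (f : M → ℝ), ω k * ∫ x, f x ∂μ[|U k] = ∫ x in U k, f x ∂μ := fun k f => by
      rw [← hμU, ← smul_eq_mul, measureReal_smul_integral_cond (by simp [hμU, (hω k).ne'])]
    intro i j
    split_ifs with hij
    · rw [hij, mul_assoc, hcond]
    · rw [mul_comm (ω i), mul_assoc, hcond, ← integral_const_mul]
      exact integral_congr_ae (.of_forall fun x => hcond j (K x))
  have hone : 1 = ∑ i, ∑ j, ∫ x in U i, ∫ y in U j, K x y ∂μ ∂μ :=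
    hK1 ▸ integral_integral_eq_sum_sum_setIntegral hmeas hdisj hcover
      (integrable_of_abs_le hKm fun p => hKb p.1 p.2)
  have hprod : ∏ j, (ω j)⁻¹ = ∏ j, (μ.real (U j))⁻¹ := by simp only [hμU]
  rw [hprod, ← smul_eq_mul, ← integral_pi_cond, integral_sub,
    integral_sum_sum_mul_comp_eval_eval ω hKm hKb]
  · simp only [hpair, integral_const, probReal_univ, one_smul]
    rw [hone, Finset.sum_sum_ite_sub_sum_sum]
    refine Finset.sum_congr rfl fun j _ => ?_
    rw [integral_integral_diag_sub hKm hKb, measureReal_restrict_apply_univ, hμU]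
  · exact integrable_finsetSum _ fun i _ => integrable_finsetSum _ fun j _ =>
      (integrable_of_abs_le (by fun_prop) fun z => hKb _ _).const_mul _
  · exact integrable_const 1

/-- The averaging identity in the proof of Theorem 5: the mean over stratified samples
`(z₁,…,z_N) ∈ U₁ × ⋯ × U_N` of the energy `∑_{i,j} ω_i ω_j K(z_i,z_j) − 1` equals
`∑_j ∫_{U_j} ∫_{U_j} (K(x,x) − K(x,y)) dx dy`. -/
theorem stmt6 {M : Type*} [MeasureSpace M] [IsProbabilityMeasure (volume : Measure M)]
    (N : ℕ) (U : Fin N → Set M) (hmeas : ∀ j, MeasurableSet (U j))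
    (hdisj : Pairwise (Function.onFun Disjoint U)) (hcover : (⋃ j, U j) = Set.univ)
    (ω : Fin N → ℝ) (hω : ∀ j, 0 < ω j)
    (hvol : ∀ j, volume (U j) = ENNReal.ofReal (ω j))
    (K : M → M → ℝ) (hKm : Measurable (Function.uncurry K))
    (C : ℝ) (hKb : ∀ x y, |K x y| ≤ C) (hKs : ∀ x y, K x y = K y x)
    (hK1 : (∫ x, ∫ y, K x y) = 1) :
    (∏ j, (ω j)⁻¹) *
        (∫ z : Fin N → M, ((∑ i, ∑ j, ω i * ω j * K (z i) (z j)) - 1)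
          ∂Measure.pi fun j => (volume : Measure M).restrict (U j))
      = ∑ j, ∫ x in U j, ∫ y in U j, (K x x - K x y) :=
  stmt6_general N U hmeas hdisj hcover ω hω hvol K hKm C hKb hK1
end

section
/- Let T be a self-adjoint operator on L²(M) (M a probability space) with orthonormal eigenbasis (φ_λ), eigenvalues T(λ), such that T1 = 1 (constants are fixed) and the φ_λ also satisfy ∑_λ (1+λ²)^{−α} |φ_λ(x)|² ≤ C² for some α and all x. Then for every f ∈ L² with ∑_λ (1+λ²)^α |F f(λ)|² < ∞ and every x, |T f(x) − ∫_M f dx| ≤ C · sup_{λ ≠ 0} |T(λ)| · (∑_λ (1+λ²)^α |F f(λ)|²)^{1/2}. -/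
/-!
Expand `T f(x) - ∫ f = ∑_{λ ≠ 0} T(λ) F f(λ) φ_λ(x)`, the `λ = 0` term being `F f(0) = ∫ f`
because `T` fixes constants. Each remaining term is at most `S |F f(λ)| |φ_λ(x)|`, and
Cauchy–Schwarz with the weights `(1 + λ²)^α` and `(1 + λ²)^(-α)` splits the sum into the
Sobolev norm of `f` times the pointwise Weyl sum, which is at most `C²`.
-/

open MeasureTheory Real

namespace Real

theorem summable_and_tsum_mul_le_sqrt_mul_sqrt {ι : Type*} {f g : ι → ℝ}
    (hf : ∀ i, 0 ≤ f i) (hg : ∀ i, 0 ≤ g i)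
    (hf_sum : Summable fun i => f i ^ 2) (hg_sum : Summable fun i => g i ^ 2) :
    (Summable fun i => f i * g i) ∧
      ∑' i, f i * g i ≤ √(∑' i, f i ^ 2) * √(∑' i, g i ^ 2) := by
  simp only [← rpow_two] at hf_sum hg_sum
  simpa only [← rpow_two, sqrt_eq_rpow, one_div] using
    summable_and_inner_le_Lp_mul_Lq_tsum_of_nonneg HolderConjugate.two_two hf hg hf_sum hg_sum

theorem summable_and_tsum_mul_le_sqrt_mul_sqrt_of_mul_eq_one {ι : Type*} {u v w w' : ι → ℝ}
    (hu : ∀ i, 0 ≤ u i) (hv : ∀ i, 0 ≤ v i) (hw : ∀ i, 0 ≤ w i) (hww' : ∀ i, w i * w' i = 1)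
    (hu_sum : Summable fun i => w i * u i ^ 2) (hv_sum : Summable fun i => w' i * v i ^ 2) :
    (Summable fun i => u i * v i) ∧
      ∑' i, u i * v i ≤ √(∑' i, w i * u i ^ 2) * √(∑' i, w' i * v i ^ 2) := by
  have hw' : ∀ i, 0 ≤ w' i := fun i =>
    eq_inv_of_mul_eq_one_right (hww' i) ▸ inv_nonneg.mpr (hw i)
  have hsq : ∀ (a : ι → ℝ) (b : ι → ℝ), (∀ i, 0 ≤ a i) →
      (fun i => (√(a i) * b i) ^ 2) = fun i => a i * b i ^ 2 := fun a b ha =>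
    funext fun i => by rw [mul_pow, sq_sqrt (ha i)]
  have hprod : ∀ i, √(w i) * u i * (√(w' i) * v i) = u i * v i := fun i => by
    rw [mul_mul_mul_comm, ← sqrt_mul (hw i), hww', sqrt_one, one_mul]
  have key := summable_and_tsum_mul_le_sqrt_mul_sqrt
    (f := fun i => √(w i) * u i) (g := fun i => √(w' i) * v i)
    (fun i => mul_nonneg (sqrt_nonneg _) (hu i)) (fun i => mul_nonneg (sqrt_nonneg _) (hv i))
    (by rwa [hsq w u hw]) (by rwa [hsq w' v hw'])
  simpa only [hprod, hsq w u hw, hsq w' v hw'] using key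

end Real

theorem norm_tsum_sub_le_tsum_of_norm_le {ι E : Type*} [NormedAddCommGroup E]
    {g : ι → E} {c : ι → ℝ} (i₀ : ι) (hg : Summable g) (hc : Summable c) (hc₀ : 0 ≤ c i₀)
    (hgc : ∀ i, i ≠ i₀ → ‖g i‖ ≤ c i) :
    ‖∑' i, g i - g i₀‖ ≤ ∑' i, c i := by
  classical
  have hle : ∀ i, ‖if i = i₀ then 0 else g i‖ ≤ c i := fun i => by
    split_ifs with h
    · simpa [h] using hc₀
    · exact hgc i h
  have hnorm : Summable fun i => ‖if i = i₀ then 0 else g i‖ :=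
    hc.of_nonneg_of_le (fun _ => norm_nonneg _) hle
  calc ‖∑' i, g i - g i₀‖ = ‖∑' i, if i = i₀ then 0 else g i‖ := by
        rw [hg.tsum_eq_add_tsum_ite i₀, add_sub_cancel_left]
    _ ≤ ∑' i, ‖if i = i₀ then 0 else g i‖ := norm_tsum_le_tsum_norm hnorm
    _ ≤ ∑' i, c i := hnorm.tsum_le_tsum hle hc

theorem stmt17_general {M : Type*} [MeasureSpace M]
    {ι : Type*} (l : ι → ℝ) (i₀ : ι)
    (φ : ι → M → ℂ) (hφ0 : ∀ x, φ i₀ x = 1)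
    (τ : ι → ℂ) (hτ0 : τ i₀ = 1) (S : ℝ) (hS0 : 0 ≤ S) (hS : ∀ i, i ≠ i₀ → ‖τ i‖ ≤ S)
    (f : M → ℂ) (Ff : ι → ℂ)
    (hFf0 : Ff i₀ = ∫ x, f x)
    (α C : ℝ) (hC : 0 ≤ C)
    (hFsum : Summable fun i => (1 + l i ^ 2) ^ α * ‖Ff i‖ ^ 2)
    (x : M)
    (hφsum : Summable fun i => (1 + l i ^ 2) ^ (-α) * ‖φ i x‖ ^ 2)
    (hφbound : (∑' i, (1 + l i ^ 2) ^ (-α) * ‖φ i x‖ ^ 2) ≤ C ^ 2)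
    (Tfx : ℂ) (hTsum : Summable fun i => τ i * Ff i * φ i x)
    (hTfx : Tfx = ∑' i, τ i * Ff i * φ i x) :
    ‖Tfx - ∫ x, f x‖ ≤
      C * S * Real.sqrt (∑' i, (1 + l i ^ 2) ^ α * ‖Ff i‖ ^ 2) := by
  have hweight : ∀ i, (1 + l i ^ 2) ^ α * (1 + l i ^ 2) ^ (-α) = 1 := fun i => by
    rw [← rpow_add (by positivity), add_neg_cancel, rpow_zero]
  obtain ⟨hsum, hCS⟩ := summable_and_tsum_mul_le_sqrt_mul_sqrt_of_mul_eq_one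
    (fun i => norm_nonneg (Ff i)) (fun i => norm_nonneg (φ i x))
    (fun i => by positivity) hweight hFsum hφsum
  have hconst : τ i₀ * Ff i₀ * φ i₀ x = ∫ x, f x := by rw [hτ0, hFf0, hφ0, one_mul, mul_one]
  have htail : ‖Tfx - ∫ x, f x‖ ≤ ∑' i, S * (‖Ff i‖ * ‖φ i x‖) := by
    rw [hTfx, ← hconst]
    refine norm_tsum_sub_le_tsum_of_norm_le i₀ hTsum (hsum.mul_left S) (by positivity)
      fun i hi => ?_
    rw [norm_mul, norm_mul, mul_assoc]
    exact mul_le_mul_of_nonneg_right (hS i hi) (by positivity)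
  have hWeyl : √(∑' i, (1 + l i ^ 2) ^ (-α) * ‖φ i x‖ ^ 2) ≤ C :=
    sqrt_le_iff.mpr ⟨hC, hφbound⟩
  calc ‖Tfx - ∫ x, f x‖ ≤ S * ∑' i, ‖Ff i‖ * ‖φ i x‖ := htail.trans_eq tsum_mul_left
    _ ≤ S * (√(∑' i, (1 + l i ^ 2) ^ α * ‖Ff i‖ ^ 2) * C) := by
        gcongr
        exact hCS.trans (mul_le_mul_of_nonneg_left hWeyl (sqrt_nonneg _))
    _ = C * S * √(∑' i, (1 + l i ^ 2) ^ α * ‖Ff i‖ ^ 2) := by ring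

/-- Abstract spectral-gap quadrature bound from Remark 22: if `T f = ∑ T(λ) F f(λ) φ_λ`
with `T` fixing constants and the eigenfunctions satisfying a pointwise Weyl bound, then
the quadrature error is controlled by the spectral gap times the Sobolev norm. -/
theorem stmt17 {M : Type*} [MeasureSpace M] [IsProbabilityMeasure (volume : Measure M)]
    {ι : Type*} (l : ι → ℝ) (hl : ∀ i, 0 ≤ l i) (i₀ : ι) (hl0 : l i₀ = 0)
    (φ : ι → M → ℂ) (hφ0 : ∀ x, φ i₀ x = 1)
    (τ : ι → ℂ) (hτ0 : τ i₀ = 1) (S : ℝ) (hS0 : 0 ≤ S) (hS : ∀ i, i ≠ i₀ → ‖τ i‖ ≤ S)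
    (f : M → ℂ) (hf : Integrable f (volume : Measure M)) (Ff : ι → ℂ)
    (hFf0 : Ff i₀ = ∫ x, f x)
    (α C : ℝ) (hC : 0 ≤ C)
    (hFsum : Summable fun i => (1 + l i ^ 2) ^ α * ‖Ff i‖ ^ 2)
    (x : M)
    (hφsum : Summable fun i => (1 + l i ^ 2) ^ (-α) * ‖φ i x‖ ^ 2)
    (hφbound : (∑' i, (1 + l i ^ 2) ^ (-α) * ‖φ i x‖ ^ 2) ≤ C ^ 2)
    (Tfx : ℂ) (hTsum : Summable fun i => τ i * Ff i * φ i x)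
    (hTfx : Tfx = ∑' i, τ i * Ff i * φ i x) :
    ‖Tfx - ∫ x, f x‖ ≤
      C * S * Real.sqrt (∑' i, (1 + l i ^ 2) ^ α * ‖Ff i‖ ^ 2) :=
  stmt17_general l i₀ φ hφ0 τ hτ0 S hS0 hS f Ff hFf0 α C hC hFsum x hφsum hφbound Tfx hTsum hTfx
end
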